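/- arXiv:1804.00654 — 2 statements merged into one kernel-verified Lean document; each statement's English description precedes it below -/
import Mathlib

section
/- For all nonnegative integers n and every nonnegative integer r: c_n(r) = ∑_{j=0}^n (-1)^{n-j} C(n,j) r^{(n-j)} c_j, where r^{(m)} = r(r+1)···(r+m-1) is the rising factorial and c_j = ∫_0^1 (x)_j dx are the classical Cauchy numbers of the first kind. -/
open Finset

noncomputable def Pfun (x : ℝ) (j : ℕ) : ℝ := ∏ i ∈ range j, (x - i)

noncomputable def Afun (r n j : ℕ) : ℝ :=
  (-1) ^ (n - j) * (n.choose j : ℝ) * ∏ i ∈ range (n - j), ((r : ℝ) + i)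

lemma coeff_step (n r j : ℕ) (hj : j < n + 1) :
    Afun r n j - Afun r n (j+1) * ((r : ℝ) + ((n - (j+1) : ℕ) : ℝ))
      = Afun r (n+1) (j+1) := by
  unfold Afun
  rcases Nat.lt_or_ge j n with h | h
  · have h1 : n - j = (n - (j+1)) + 1 := by omega
    have h2 : n + 1 - (j+1) = n - j := by omega
    rw [h2, h1, prod_range_succ, pow_succ, Nat.choose_succ_succ]
    push_cast
    ring
  · have hjn : j = n := by omega
    subst hjn
    simp [Nat.choose_succ_self, Nat.sub_self]

lemma key (r n : ℕ) (x : ℝ) :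
    (∏ j ∈ range n, (x - r - j)) = ∑ j ∈ range (n + 1), Afun r n j * Pfun x j := by
  induction n with
  | zero => simp [Afun, Pfun]
  | succ n ih =>
    rw [prod_range_succ, ih, sum_mul]
    have split : ∀ j ∈ range (n+1),
        Afun r n j * Pfun x j * (x - r - n)
          = Afun r n j * Pfun x (j+1)
            - (Afun r n j * ((r : ℝ) + ((n - j : ℕ) : ℝ))) * Pfun x j := by
      intro j hj
      rw [mem_range] at hj
      have hc : (n : ℝ) = (j : ℝ) + ((n - j : ℕ) : ℝ) := by
        have := Nat.cast_sub (R := ℝ) (Nat.le_of_lt_succ hj)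
        linarith [this]
      unfold Pfun
      rw [prod_range_succ, hc]
      ring
    rw [sum_congr rfl split, sum_sub_distrib]
    have e2 : ∑ j ∈ range (n+1), (Afun r n j * ((r : ℝ) + ((n - j : ℕ) : ℝ))) * Pfun x j
        = (∑ j ∈ range (n+1),
            (Afun r n (j+1) * ((r : ℝ) + ((n - (j+1) : ℕ) : ℝ))) * Pfun x (j+1))
          + (Afun r n 0 * ((r : ℝ) + ((n - 0 : ℕ) : ℝ))) * Pfun x 0 := by
      rw [Finset.sum_range_succ'
        (fun j => (Afun r n j * ((r : ℝ) + ((n - j : ℕ) : ℝ))) * Pfun x j) n]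
      rw [Finset.sum_range_succ
        (fun j => (Afun r n (j+1) * ((r : ℝ) + ((n - (j+1) : ℕ) : ℝ))) * Pfun x (j+1)) n]
      have hz : Afun r n (n+1) = 0 := by
        simp [Afun, Nat.choose_succ_self]
      simp [hz]
    have e3 : ∑ j ∈ range (n+1+1), Afun r (n+1) j * Pfun x j
        = (∑ j ∈ range (n+1), Afun r (n+1) (j+1) * Pfun x (j+1))
          + Afun r (n+1) 0 * Pfun x 0 :=
      Finset.sum_range_succ' _ (n+1)
    rw [e2, e3]
    have e4 : ∀ j ∈ range (n+1),
        Afun r n j * Pfun x (j+1)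
          - (Afun r n (j+1) * ((r : ℝ) + ((n - (j+1) : ℕ) : ℝ))) * Pfun x (j+1)
          = Afun r (n+1) (j+1) * Pfun x (j+1) := by
      intro j hj
      rw [mem_range] at hj
      rw [← sub_mul, coeff_step n r j hj]
    have e5 : Afun r (n+1) 0 = -(Afun r n 0 * ((r : ℝ) + ((n - 0 : ℕ) : ℝ))) := by
      simp only [Afun, Nat.sub_zero, Nat.choose_zero_right, Nat.cast_one, prod_range_succ,
        pow_succ]
      ring
    rw [e5, ← sum_congr rfl e4, sum_sub_distrib]
    ring


/-- `c_n(r) = ∑_{j=0}^n (-1)^{n-j} C(n,j) r^{(n-j)} c_j` for nonnegative integer `r`. -/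
theorem stmt_7 (n : ℕ) (r : ℕ) :
    (∫ x in (0:ℝ)..1, ∏ j ∈ range n, (x - r - j)) =
      ∑ j ∈ range (n + 1), (-1) ^ (n - j) * (n.choose j : ℝ) *
        (∏ i ∈ range (n - j), ((r : ℝ) + i)) *
        ∫ x in (0:ℝ)..1, ∏ i ∈ range j, (x - i) := by
  have hcont : ∀ j : ℕ, Continuous (fun x : ℝ => Pfun x j) := by
    intro j
    unfold Pfun
    exact continuous_finset_prod _ fun i _ => by fun_prop
  have h1 : (∫ x in (0:ℝ)..1, ∏ j ∈ range n, (x - r - j))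
      = ∫ x in (0:ℝ)..1, ∑ j ∈ range (n+1), Afun r n j * Pfun x j := by
    simp only [key]
  rw [h1, intervalIntegral.integral_finset_sum (fun j _ =>
    ((show Continuous (fun x : ℝ => Afun r n j * Pfun x j) from continuous_const.mul (hcont j)).intervalIntegrable _ _))]
  refine sum_congr rfl fun j _ => ?_
  rw [intervalIntegral.integral_const_mul]
  simp only [Afun, Pfun]
end

section
/- For all nonnegative integers n, k with k ≤ n and real q ≠ 0, r: w_{q,r}(n,k) = ∑_{i=k}^n C(n,i) (-1)^{n-i} q^{i-k} [r|q]_{n-i} s(i,k), where s(i,k) are the signed Stirling numbers of the first kind and [r|q]_m = ∏_{j=0}^{m-1}(r + jq). -/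
open Finset

open Polynomial

lemma coeff_ext (N : ℕ) (f g : ℕ → ℝ)
    (h : ∀ x : ℝ, ∑ l ∈ range N, f l * x ^ l = ∑ l ∈ range N, g l * x ^ l) :
    ∀ l < N, f l = g l := by
  have hp : (∑ l ∈ range N, C (f l) * X ^ l) = ∑ l ∈ range N, C (g l) * X ^ l := by
    apply Polynomial.funext
    intro x
    simp only [eval_finset_sum, eval_mul, eval_C, eval_pow, eval_X]; exact h x
  intro l hl
  have := congrArg (fun p => Polynomial.coeff p l) hp
  simpa [Polynomial.finset_sum_coeff, coeff_C_mul, coeff_X_pow,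
    Finset.sum_ite_eq' (range N) l, hl] using this

lemma vand (q r : ℝ) : ∀ n : ℕ, ∀ x : ℝ,
    ∏ j ∈ range n, (x - r - j * q) =
    ∑ i ∈ range (n + 1), ((n.choose i : ℝ) * (-1) ^ (n - i) *
      ∏ j ∈ range (n - i), (r + j * q)) * ∏ j ∈ range i, (x - j * q) := by
  intro n
  induction n with
  | zero => intro x; simp
  | succ n ih =>
    intro x
    set F : ℕ → ℝ := fun i => ∏ j ∈ range i, (x - j * q) with hF
    set c : ℕ → ℕ → ℝ := fun m i => ((m.choose i : ℝ) * (-1) ^ (m - i) *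
      ∏ j ∈ range (m - i), (r + j * q)) with hc
    have key : ∀ i ≤ n, c (n+1) (i+1) = c n i + c n (i+1) * ((i:ℝ) * q + q - r - n * q) := by
      intro i hi
      rcases eq_or_lt_of_le hi with h | h
      · subst h
        simp [hc, Nat.choose_succ_self]
      · have h1 : n - i = (n - (i+1)) + 1 := by omega
        have h2 : ((n - (i+1) : ℕ) : ℝ) = (n : ℝ) - i - 1 := by
          have : ((n - (i+1) : ℕ) : ℝ) = ((n:ℕ) : ℝ) - ((i+1 : ℕ) : ℝ) := by
            exact_mod_cast Nat.cast_sub (by omega)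
          push_cast at this ⊢; linarith
        simp only [hc, Nat.choose_succ_succ', Nat.succ_sub_succ]
        push_cast
        rw [h1, prod_range_succ, pow_succ]
        rw [h2]
        ring
    have hFs : ∀ i, F (i+1) = F i * (x - i * q) := fun i => prod_range_succ _ _
    calc ∏ j ∈ range (n+1), (x - r - j * q)
        = (∑ i ∈ range (n + 1), c n i * F i) * (x - r - n * q) := by
          rw [prod_range_succ, ih x]
      _ = ∑ i ∈ range (n + 1), (c n i * F (i+1) + c n i * ((i:ℝ) * q - r - n * q) * F i) := by
          rw [Finset.sum_mul]
          apply Finset.sum_congr rfl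
          intro i _
          rw [hFs i]; ring
      _ = ∑ i ∈ range (n + 1), c n i * F (i+1)
          + ∑ i ∈ range (n + 1), c n i * ((i:ℝ) * q - r - n * q) * F i := by
          rw [Finset.sum_add_distrib]
      _ = ∑ i ∈ range (n + 2), c (n+1) i * F i := by
          rw [Finset.sum_range_succ' (fun i => c (n+1) i * F i) (n+1)]
          rw [Finset.sum_range_succ' (fun i => c n i * ((i:ℝ) * q - r - n * q) * F i) n]
          have hlast : ∑ i ∈ range n, c n (i+1) * (((i:ℝ)+1) * q - r - n * q) * F (i+1)
              = ∑ i ∈ range (n+1), c n (i+1) * (((i:ℝ)+1) * q - r - n * q) * F (i+1) := by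
            rw [Finset.sum_range_succ]
            simp [hc, Nat.choose_succ_self]
          push_cast
          rw [hlast, ← add_assoc, ← Finset.sum_add_distrib]
          have : ∑ i ∈ range (n+1), (c n i * F (i+1) + c n (i+1) * (((i:ℝ)+1) * q - r - n * q) * F (i+1))
              = ∑ i ∈ range (n+1), c (n+1) (i+1) * F (i+1) := by
            apply Finset.sum_congr rfl
            intro i hi
            rw [key i (by simpa using Nat.lt_succ_iff.mp (mem_range.mp hi))]
            ring
          rw [this]
          congr 1
          simp only [hc, Nat.choose_zero_right, Nat.cast_one]
          simp only [Nat.sub_zero]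
          rw [prod_range_succ, pow_succ]
          ring

lemma fall (q : ℝ) (hq : q ≠ 0) (s : ℕ → ℕ → ℝ)
    (hs : ∀ m : ℕ, ∀ x : ℝ,
      ∏ i ∈ range m, (x - i) = ∑ l ∈ range (m + 1), s m l * x ^ l)
    (i : ℕ) (x : ℝ) :
    ∏ j ∈ range i, (x - j * q) = ∑ l ∈ range (i + 1), q ^ (i - l) * s i l * x ^ l := by
  have h1 : ∏ j ∈ range i, (x - j * q) = q ^ i * ∏ j ∈ range i, (x / q - j) := by
    have : ∀ j ∈ range i, x - j * q = q * (x / q - j) := by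
      intro j _; field_simp
    rw [Finset.prod_congr rfl this, Finset.prod_mul_distrib, Finset.prod_const,
      Finset.card_range]
  rw [h1, hs i (x / q), Finset.mul_sum]
  apply Finset.sum_congr rfl
  intro l hl
  have hle : l ≤ i := by have := mem_range.mp hl; omega
  have hq2 : q ^ (i - l) * q ^ l = q ^ i := by rw [← pow_add]; congr 1; omega
  rw [div_pow, ← hq2]
  field_simp

/-- `w_{q,r}(n,k) = ∑_{i=k}^n C(n,i)(-1)^{n-i} q^{i-k} [r|q]_{n-i} s(i,k)`. -/
theorem stmt_14 (n k : ℕ) (hkn : k ≤ n) (q r : ℝ) (hq : q ≠ 0)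
    (w : ℕ → ℕ → ℝ)
    (hw : ∀ m : ℕ, ∀ x : ℝ,
      ∏ j ∈ range m, (x - r - j * q) = ∑ l ∈ range (m + 1), w m l * x ^ l)
    (s : ℕ → ℕ → ℝ)
    (hs : ∀ m : ℕ, ∀ x : ℝ,
      ∏ i ∈ range m, (x - i) = ∑ l ∈ range (m + 1), s m l * x ^ l) :
    w n k = ∑ i ∈ Icc k n, (n.choose i : ℝ) * (-1) ^ (n - i) * q ^ (i - k) *
      (∏ j ∈ range (n - i), (r + j * q)) * s i k := by
  set c : ℕ → ℝ := fun i => (n.choose i : ℝ) * (-1) ^ (n - i) *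
      ∏ j ∈ range (n - i), (r + j * q) with hc
  set g : ℕ → ℝ := fun l => ∑ i ∈ range (n + 1),
      (if l ≤ i then c i * (q ^ (i - l) * s i l) else 0) with hg
  have hxx : ∀ x : ℝ, ∑ l ∈ range (n + 1), w n l * x ^ l
      = ∑ l ∈ range (n + 1), g l * x ^ l := by
    intro x
    rw [← hw n x, vand q r n x]
    calc ∑ i ∈ range (n + 1), c i * ∏ j ∈ range i, (x - j * q)
        = ∑ i ∈ range (n + 1), ∑ l ∈ range (n + 1),
            (if l ≤ i then c i * (q ^ (i - l) * s i l) else 0) * x ^ l := by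
          apply Finset.sum_congr rfl
          intro i hi
          rw [fall q hq s hs i x, Finset.mul_sum]
          rw [← Finset.sum_subset (Finset.range_subset_range.mpr
            (by have := mem_range.mp hi; omega : i + 1 ≤ n + 1) : range (i+1) ⊆ range (n+1))
            (fun l _ hl => by
              have h2 : i + 1 ≤ l := by simpa using hl
              rw [if_neg (by omega), zero_mul])]
          apply Finset.sum_congr rfl
          intro l hl
          rw [if_pos (by simp at hl; omega)]
          ring
      _ = ∑ l ∈ range (n + 1), g l * x ^ l := by
          rw [Finset.sum_comm]
          apply Finset.sum_congr rfl
          intro l _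
          rw [hg, Finset.sum_mul]
  have hwk : w n k = g k := coeff_ext (n + 1) _ _ hxx k (by omega)
  rw [hwk, show g k = ∑ i ∈ range (n + 1),
    (if k ≤ i then c i * (q ^ (i - k) * s i k) else 0) from rfl, ← Finset.sum_filter]
  have hset : (range (n + 1)).filter (fun i => k ≤ i) = Icc k n := by
    ext a; simp [Finset.mem_filter, Finset.mem_range, Finset.mem_Icc]; omega
  rw [hset]
  apply Finset.sum_congr rfl
  intro i _
  rw [hc]
  ring
end
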